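/- Let G be a graph with maximum degree at most d and tree-width at most w. Then G has a tree-cut decomposition of adhesion at most (2w+2)d such that every torso has at most (d+1)(w+1) vertices; in particular, the tree-cut width of G is at most (2w+2)d. -/

import Mathlib

open Sym2

/-- A finite multigraph: finite vertex and edge types, each edge has an
unordered pair of endpoints, and there are no loops. -/
structure Multigraph where
  V : Type
  E : Type
  finV : Finite V
  finE : Finite E
  ends : E → Sym2 V
  no_loops : ∀ e, ¬ (ends e).IsDiag

attribute [instance] Multigraph.finV Multigraph.finE

namespace Multigraph

/-- `IsWalk G vs es`: `vs` is the vertex sequence and `es` the edge sequence of a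
walk in `G`. -/
inductive IsWalk (G : Multigraph) : List G.V → List G.E → Prop
  | nil (v : G.V) : IsWalk G [v] []
  | cons {v : G.V} {vs : List G.V} {es : List G.E} (u : G.V) (e : G.E)
      (he : G.ends e = s(u, v)) (hw : IsWalk G (v :: vs) es) :
      IsWalk G (u :: v :: vs) (e :: es)

/-- A path from `a` to `b` in the multigraph `G`, given by its vertex sequence `vs`
and edge sequence `es`. -/
def IsPathBetween (G : Multigraph) (a b : G.V) (vs : List G.V) (es : List G.E) : Prop :=
  G.IsWalk vs es ∧ vs.Nodup ∧ vs.head? = some a ∧ vs.getLast? = some b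

/-- A weak immersion of `H` into `G`. -/
structure WeakImmersion (H G : Multigraph) where
  vmap : H.V → G.V
  vmap_inj : Function.Injective vmap
  pverts : H.E → List G.V
  pedges : H.E → List G.E
  is_path : ∀ f : H.E, ∃ x y : H.V, H.ends f = s(x, y) ∧
    G.IsPathBetween (vmap x) (vmap y) (pverts f) (pedges f)
  edge_disjoint : ∀ f f' : H.E, f ≠ f' → ∀ e, e ∈ pedges f → e ∉ pedges f'

/-- `G.Immerses H`: `G` admits a weak immersion of `H`. -/
def Immerses (G H : Multigraph) : Prop := Nonempty (WeakImmersion H G)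

/-- The degree of a vertex: the number of edges incident with it. -/
noncomputable def degree (G : Multigraph) (v : G.V) : ℕ :=
  Nat.card {e : G.E // v ∈ G.ends e}

/-- The edge cut `δ(U)`: edges with exactly one endpoint in `U`. -/
def edgeCut (G : Multigraph) (U : Set G.V) : Set G.E :=
  {e | ∃ a b, G.ends e = s(a, b) ∧ a ∈ U ∧ b ∉ U}

/-- There exist `k` pairwise edge-disjoint paths from `a` to `b` in `G`. -/
def EdgeDisjointPaths (G : Multigraph) (a b : G.V) (k : ℕ) : Prop :=
  ∃ (vs : Fin k → List G.V) (es : Fin k → List G.E),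
    (∀ i, G.IsPathBetween a b (vs i) (es i)) ∧
    ∀ i j, i ≠ j → ∀ e, e ∈ es i → e ∉ es j

/-- Isomorphism of multigraphs. -/
structure Iso (G H : Multigraph) where
  vmap : G.V ≃ H.V
  emap : G.E ≃ H.E
  ends_map : ∀ e, H.ends (emap e) = Sym2.map vmap (G.ends e)

/-- The complete graph `K_t` as a multigraph. -/
def completeGraph (t : ℕ) : Multigraph where
  V := Fin t
  E := {p : Sym2 (Fin t) // ¬ p.IsDiag}
  finV := inferInstance
  finE := inferInstance
  ends := Subtype.val
  no_loops := fun e => e.prop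

/-- The multigraph `S_{k,n}`: vertices `x_1, …, x_n, y` (with `y = none`) and `k`
parallel edges from each `x_i` to `y`. -/
def star (k n : ℕ) : Multigraph where
  V := Option (Fin n)
  E := Fin n × Fin k
  finV := inferInstance
  finE := inferInstance
  ends := fun p => s(some p.1, none)
  no_loops := fun p => by simp [Sym2.mk_isDiag_iff]

/-! ### Edge sums -/

/-- A witness that `G` is a `k`-edge sum of `G₁` and `G₂`. -/
structure EdgeSumWitness (k : ℕ) (G G₁ G₂ : Multigraph) where
  v₁ : G₁.V
  v₂ : G₂.V
  deg₁ : G₁.degree v₁ = k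
  deg₂ : G₂.degree v₂ = k
  π : {e : G₁.E // v₁ ∈ G₁.ends e} ≃ {e : G₂.E // v₂ ∈ G₂.ends e}
  α : G.V ≃ {x : G₁.V // x ≠ v₁} ⊕ {y : G₂.V // y ≠ v₂}
  β : G.E ≃ ({e : G₁.E // v₁ ∉ G₁.ends e} ⊕ {e : G₂.E // v₂ ∉ G₂.ends e}) ⊕
      {e : G₁.E // v₁ ∈ G₁.ends e}
  ends₁ : ∀ (e : {e : G₁.E // v₁ ∉ G₁.ends e}) (x y : G₁.V) (hx : x ≠ v₁) (hy : y ≠ v₁),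
    G₁.ends e.val = s(x, y) →
      G.ends (β.symm (Sum.inl (Sum.inl e))) = s(α.symm (Sum.inl ⟨x, hx⟩), α.symm (Sum.inl ⟨y, hy⟩))
  ends₂ : ∀ (e : {e : G₂.E // v₂ ∉ G₂.ends e}) (x y : G₂.V) (hx : x ≠ v₂) (hy : y ≠ v₂),
    G₂.ends e.val = s(x, y) →
      G.ends (β.symm (Sum.inl (Sum.inr e))) = s(α.symm (Sum.inr ⟨x, hx⟩), α.symm (Sum.inr ⟨y, hy⟩))
  ends₃ : ∀ (e : {e : G₁.E // v₁ ∈ G₁.ends e}) (x : G₁.V) (y : G₂.V) (hx : x ≠ v₁) (hy : y ≠ v₂),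
    G₁.ends e.val = s(x, v₁) → G₂.ends (π e).val = s(y, v₂) →
      G.ends (β.symm (Sum.inr e)) = s(α.symm (Sum.inl ⟨x, hx⟩), α.symm (Sum.inr ⟨y, hy⟩))

/-- `G` is a `k`-edge sum of `G₁` and `G₂`. -/
def IsEdgeSum (k : ℕ) (G G₁ G₂ : Multigraph) : Prop :=
  Nonempty (EdgeSumWitness k G G₁ G₂)

/-- The edge sum is grounded. -/
def EdgeSumWitness.Grounded {k : ℕ} {G G₁ G₂ : Multigraph}
    (w : EdgeSumWitness k G G₁ G₂) : Prop :=
  (∃ v', v' ≠ w.v₁ ∧ G₁.EdgeDisjointPaths w.v₁ v' k) ∧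
  (∃ v', v' ≠ w.v₂ ∧ G₂.EdgeDisjointPaths w.v₂ v' k)

/-- `G` is a grounded `k`-edge sum of `G₁` and `G₂`. -/
def IsGroundedEdgeSum (k : ℕ) (G G₁ G₂ : Multigraph) : Prop :=
  ∃ w : EdgeSumWitness k G G₁ G₂, w.Grounded

/-! ### Auxiliary simple-graph operations -/

/-- Delete the vertex `t` from `T` (keeping it as an isolated vertex). -/
def delAt {τ : Type} (T : SimpleGraph τ) (t : τ) : SimpleGraph τ where
  Adj a b := T.Adj a b ∧ a ≠ t ∧ b ≠ t
  symm := ⟨fun a b h => ⟨h.1.symm, h.2.2, h.2.1⟩⟩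
  loopless := ⟨fun a h => T.loopless.irrefl a h.1⟩

lemma reach_delAt {τ : Type} (T : SimpleGraph τ) (t : τ) {a b : τ} (q : T.Walk a b)
    (ht : t ∉ q.support) : (delAt T t).Reachable a b := by
  induction q with
  | nil => exact SimpleGraph.Reachable.refl _
  | @cons u v w h p ih =>
      simp only [SimpleGraph.Walk.support_cons, List.mem_cons] at ht
      push_neg at ht
      have hv : v ≠ t := fun hv => ht.2 (hv ▸ p.start_mem_support)
      exact (SimpleGraph.Adj.reachable (G := delAt T t) ⟨h, Ne.symm ht.1, hv⟩).trans (ih ht.2)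

/-! ### Tree-cut decompositions -/

/-- A tree-cut decomposition of the multigraph `G`. -/
structure TreeCutDecomp (G : Multigraph) where
  T : Type
  finT : Finite T
  tree : SimpleGraph T
  isTree : tree.IsTree
  bag : T → Set G.V
  disj : ∀ s t : T, s ≠ t → Disjoint (bag s) (bag t)
  covers : ∀ v : G.V, ∃ t : T, v ∈ bag t

attribute [instance] TreeCutDecomp.finT

variable {G : Multigraph}

/-- The union of the bags on the `v`-side of the tree edge `uv`. -/
def TreeCutDecomp.sideSet (D : TreeCutDecomp G) (u v : D.T) : Set G.V :=
  {x | ∃ s, (D.tree.deleteEdges {s(u, v)}).Reachable v s ∧ x ∈ D.bag s}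

/-- The adhesion of a tree-cut decomposition. -/
noncomputable def TreeCutDecomp.adhesion (D : TreeCutDecomp G) : ℕ :=
  sSup {n | ∃ u v : D.T, D.tree.Adj u v ∧ n = (G.edgeCut (D.sideSet u v)).ncard}

lemma TreeCutDecomp.exists_periph (D : TreeCutDecomp G) (t : D.T) (v : G.V)
    (hv : v ∉ D.bag t) :
    ∃ u : D.T, D.tree.Adj t u ∧ ∃ s, v ∈ D.bag s ∧ (delAt D.tree t).Reachable s u := by
  classical
  obtain ⟨s, hs⟩ := D.covers v
  have hst : t ≠ s := fun h => hv (h ▸ hs)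
  obtain ⟨w⟩ := D.isTree.isConnected.preconnected t s
  obtain ⟨x, hadj, q, hq⟩ := SimpleGraph.Walk.exists_eq_cons_of_ne hst w.toPath.val
  have hP : (SimpleGraph.Walk.cons hadj q).IsPath := hq ▸ w.toPath.prop
  rw [SimpleGraph.Walk.cons_isPath_iff] at hP
  exact ⟨x, hadj, s, hs, (reach_delAt D.tree t q hP.2).symm⟩

open Classical in
/-- The map from `G` to the vertices of the torso at `t`. -/
noncomputable def TreeCutDecomp.proj (D : TreeCutDecomp G) (t : D.T) (v : G.V) :
    ↥(D.bag t) ⊕ {u : D.T // D.tree.Adj t u} :=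
  if hv : v ∈ D.bag t then Sum.inl ⟨v, hv⟩
  else Sum.inr ⟨(D.exists_periph t v hv).choose, (D.exists_periph t v hv).choose_spec.1⟩

/-- The torso of `G` at a node `t` of a tree-cut decomposition. -/
noncomputable def TreeCutDecomp.torso (D : TreeCutDecomp G) (t : D.T) : Multigraph where
  V := ↥(D.bag t) ⊕ {u : D.T // D.tree.Adj t u}
  E := {e : G.E // ¬ (Sym2.map (D.proj t) (G.ends e)).IsDiag}
  finV := inferInstance
  finE := inferInstance
  ends := fun e => Sym2.map (D.proj t) (G.ends e.val)
  no_loops := fun e => e.prop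

/-- The core vertices of the torso at `t`. -/
def TreeCutDecomp.torsoCore (D : TreeCutDecomp G) (t : D.T) : Set (D.torso t).V :=
  Set.range Sum.inl

/-! ### The 3-center and tree-cut width -/

/-- Condition (1): the immersion of `H` in `G` covers `X` and every vertex of `H`
of degree at most two is mapped into `X`. -/
def CenterCond (G : Multigraph) (X : Set G.V) (H : Multigraph) (I : WeakImmersion H G) : Prop :=
  X ⊆ Set.range I.vmap ∧ ∀ x : H.V, H.degree x ≤ 2 → I.vmap x ∈ X

/-- `C` is a 3-center of `(G, X)`: it admits an immersion in `G` satisfying (1) and is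
maximal with respect to immersion containment among all such graphs. -/
def IsThreeCenter (G : Multigraph) (X : Set G.V) (C : Multigraph) : Prop :=
  (∃ I : WeakImmersion C G, CenterCond G X C I) ∧
  ∀ H : Multigraph, (∃ I : WeakImmersion H G, CenterCond G X H I) → C.Immerses H

/-- The number of vertices of the 3-center of `(G, X)`. -/
noncomputable def threeCenterCard (G : Multigraph) (X : Set G.V) : ℕ :=
  sSup {n | ∃ C : Multigraph, IsThreeCenter G X C ∧ Nat.card C.V = n}

/-- The width of a tree-cut decomposition. -/
noncomputable def TreeCutDecomp.width (D : TreeCutDecomp G) : ℕ :=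
  max D.adhesion (sSup {n | ∃ t : D.T, n = threeCenterCard (D.torso t) (D.torsoCore t)})

/-- The tree-cut width of a multigraph. -/
noncomputable def tcw (G : Multigraph) : ℕ :=
  sInf {w | ∃ D : TreeCutDecomp G, D.width = w}

/-! ### Tree decompositions and tree-width -/

/-- A tree decomposition of the multigraph `G`. -/
structure TreeDecomp (G : Multigraph) where
  T : Type
  finT : Finite T
  tree : SimpleGraph T
  isTree : tree.IsTree
  bag : T → Set G.V
  covers_v : ∀ v : G.V, ∃ t : T, v ∈ bag t
  covers_e : ∀ e : G.E, ∃ (t : T) (x y : G.V), G.ends e = s(x, y) ∧ x ∈ bag t ∧ y ∈ bag t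
  connected : ∀ v : G.V, (SimpleGraph.induce {t : T | v ∈ bag t} tree).Connected

/-- The tree-width of a multigraph. -/
noncomputable def treewidth (G : Multigraph) : ℕ :=
  sInf {n | ∃ D : TreeDecomp G, ∀ t : D.T, (D.bag t).ncard ≤ n + 1}

/-! ### Walls and grids -/

def wallStep (r : ℕ) (a b : Fin r × Fin r) : Prop :=
  (a.1 = b.1 ∧ a.2.val + 1 = b.2.val) ∨
  (a.2 = b.2 ∧ a.1.val + 1 = b.1.val ∧ (a.1.val + 1) % 2 = (a.2.val + 1) % 2)

def wallAdj (r : ℕ) (a b : Fin r × Fin r) : Prop := wallStep r a b ∨ wallStep r b a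

lemma wallStep_ne {r : ℕ} {a b : Fin r × Fin r} (h : wallStep r a b) : a ≠ b := by
  rintro rfl
  rcases h with ⟨-, h⟩ | ⟨-, h, -⟩ <;> omega

/-- The `r`-wall `H_r`. -/
def wall (r : ℕ) : Multigraph where
  V := Fin r × Fin r
  E := {q : Sym2 (Fin r × Fin r) // ∃ a b, q = s(a, b) ∧ wallAdj r a b}
  finV := inferInstance
  finE := inferInstance
  ends := Subtype.val
  no_loops := by
    rintro ⟨q, a, b, rfl, hab⟩ hd
    rw [Sym2.mk_isDiag_iff] at hd
    subst hd
    rcases hab with h | h <;> exact wallStep_ne h rfl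

def gridStep (r : ℕ) (a b : Fin r × Fin r) : Prop :=
  (a.1 = b.1 ∧ a.2.val + 1 = b.2.val) ∨ (a.2 = b.2 ∧ a.1.val + 1 = b.1.val)

def gridAdj (r : ℕ) (a b : Fin r × Fin r) : Prop := gridStep r a b ∨ gridStep r b a

lemma gridStep_ne {r : ℕ} {a b : Fin r × Fin r} (h : gridStep r a b) : a ≠ b := by
  rintro rfl
  rcases h with ⟨-, h⟩ | ⟨-, h⟩ <;> omega

/-- The `r × r` grid. -/
def grid (r : ℕ) : Multigraph where
  V := Fin r × Fin r
  E := {q : Sym2 (Fin r × Fin r) // ∃ a b, q = s(a, b) ∧ gridAdj r a b}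
  finV := inferInstance
  finE := inferInstance
  ends := Subtype.val
  no_loops := by
    rintro ⟨q, a, b, rfl, hab⟩ hd
    rw [Sym2.mk_isDiag_iff] at hd
    subst hd
    rcases hab with h | h <;> exact gridStep_ne h rfl

/-! ### Subdivisions and minors -/

/-- `G` contains `H` as a subdivision: an immersion whose composite paths pairwise
meet only in common endpoints. -/
def ContainsSubdivision (G H : Multigraph) : Prop :=
  ∃ I : WeakImmersion H G, ∀ f f' : H.E, f ≠ f' → ∀ v : G.V,
    v ∈ I.pverts f → v ∈ I.pverts f' →
      ((I.pverts f).head? = some v ∨ (I.pverts f).getLast? = some v) ∧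
      ((I.pverts f').head? = some v ∨ (I.pverts f').getLast? = some v)

/-- A set of vertices is connected in `G`. -/
def ConnectedIn (G : Multigraph) (B : Set G.V) : Prop :=
  B.Nonempty ∧ ∀ a ∈ B, ∀ b ∈ B, ∃ (vs : List G.V) (es : List G.E),
    G.IsWalk vs es ∧ vs.head? = some a ∧ vs.getLast? = some b ∧ ∀ v ∈ vs, v ∈ B

/-- `G` contains `H` as a minor. -/
def HasMinor (G H : Multigraph) : Prop :=
  ∃ B : H.V → Set G.V,
    (∀ x, G.ConnectedIn (B x)) ∧
    (∀ x y, x ≠ y → Disjoint (B x) (B y)) ∧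
    ∃ η : H.E → G.E, Function.Injective η ∧
      ∀ (f : H.E) (x y : H.V), H.ends f = s(x, y) →
        ∃ a b, G.ends (η f) = s(a, b) ∧ a ∈ B x ∧ b ∈ B y

/-! ### Subgraphs, splitting off, suppression -/

/-- `A` is (isomorphic to) a subgraph of `G`. -/
def IsSubgraph (A G : Multigraph) : Prop :=
  ∃ (fv : A.V → G.V) (fe : A.E → G.E), Function.Injective fv ∧ Function.Injective fe ∧
    ∀ e, G.ends (fe e) = Sym2.map fv (A.ends e)

/-- `B` is obtained from `A` by splitting off a pair of incident edges. -/
def SplitOffRel (A B : Multigraph) : Prop :=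
  ∃ (e₁ e₂ : A.E) (x y z : A.V), e₁ ≠ e₂ ∧ x ≠ z ∧
    A.ends e₁ = s(x, y) ∧ A.ends e₂ = s(y, z) ∧
    ∃ (fV : A.V ≃ B.V) (fE : {e : A.E // e ≠ e₁ ∧ e ≠ e₂} ⊕ Unit ≃ B.E),
      (∀ e : {e : A.E // e ≠ e₁ ∧ e ≠ e₂},
        B.ends (fE (Sum.inl e)) = Sym2.map fV (A.ends e.val)) ∧
      B.ends (fE (Sum.inr ())) = s(fV x, fV z)

/-- `B` is obtained from `A` by suppressing a vertex of degree two (contracting one of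
its incident edges and deleting any resulting loops). -/
def SuppressTwoRel (A B : Multigraph) : Prop :=
  ∃ v : A.V, A.degree v = 2 ∧
    ∃ σ : A.V → B.V,
      (∀ x y, x ≠ v → y ≠ v → (σ x = σ y ↔ x = y)) ∧
      (∀ y : B.V, ∃ x, x ≠ v ∧ σ x = y) ∧
      (∃ a, a ≠ v ∧ (∃ e, A.ends e = s(v, a)) ∧ σ v = σ a) ∧
      ∃ τ : {e : A.E // ¬ (Sym2.map σ (A.ends e)).IsDiag} ≃ B.E,
        ∀ e, B.ends (τ e) = Sym2.map σ (A.ends e.val)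

/-- A multigraph together with a marked set of vertices. -/
structure MarkedGraph where
  G : Multigraph
  X : Set G.V

/-- One step of suppressing a vertex outside the marked set of degree at most two
(for degree zero this deletes the vertex). -/
def SuppressStep (A B : MarkedGraph) : Prop :=
  ∃ v : A.G.V, v ∉ A.X ∧ A.G.degree v ≤ 2 ∧
    ∃ σ : A.G.V → B.G.V,
      (∀ x y, x ≠ v → y ≠ v → (σ x = σ y ↔ x = y)) ∧
      (∀ y : B.G.V, ∃ x, x ≠ v ∧ σ x = y) ∧
      B.X = {y | ∃ x, x ∈ A.X ∧ σ x = y} ∧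
      (1 ≤ A.G.degree v → ∃ a, a ≠ v ∧ (∃ e, A.G.ends e = s(v, a)) ∧ σ v = σ a) ∧
      ∃ τ : {e : A.G.E // ¬ (Sym2.map σ (A.G.ends e)).IsDiag} ≃ B.G.E,
        ∀ e, B.G.ends (τ e) = Sym2.map σ (A.G.ends e.val)

/-! ### Trees and cycles as multigraphs -/

/-- A multigraph is a tree if it corresponds to a simple tree on its vertex set. -/
def IsTreeGraph (G : Multigraph) : Prop :=
  ∃ S : SimpleGraph G.V, S.IsTree ∧ ∃ φ : G.E ≃ S.edgeSet, ∀ e, (φ e : Sym2 G.V) = G.ends e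

/-- The cycle on `n + 3` vertices. -/
def cycleGraph (n : ℕ) : Multigraph where
  V := Fin (n + 3)
  E := Fin (n + 3)
  finV := inferInstance
  finE := inferInstance
  ends := fun i => s(i, i + 1)
  no_loops := by
    intro i hd
    rw [Sym2.mk_isDiag_iff] at hd
    have h1 : (i : Fin (n + 3)) + 0 = i + 1 := by simpa using hd
    have h01 : (0 : Fin (n + 3)) = 1 := add_left_cancel h1
    have := congrArg Fin.val h01
    simp [Fin.val_one] at this

/-- A matching in a multigraph: a set of pairwise vertex-disjoint edges. -/
def IsMatching (G : Multigraph) (M : Set G.E) : Prop :=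
  ∀ e ∈ M, ∀ e' ∈ M, e ≠ e' → ∀ v : G.V, v ∈ G.ends e → v ∉ G.ends e'

end Multigraph


/-!
Root a tree decomposition of width `w`, binarise its tree in left-child right-sibling fashion,
and hang the vertices placed at each node on a fresh leaf below it. A torso then consists of at
most `w + 1` vertices and one neighbouring node, or of at most four neighbouring nodes. Below any
edge of the new tree lie the vertices placed at the descendants of a run of consecutive siblings
(or at a single node); the original tree can only be left from there through one node `c`, so
every edge of `G` leaving this set has an end in the bag of `c`, giving at most `(w + 1) d` edges.
-/

section ParentFunction

variable {V : Type*}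

def parentGraph (f : V → V) : SimpleGraph V where
  Adj a b := a ≠ b ∧ (f a = b ∨ f b = a)
  symm := ⟨fun _ _ h => ⟨h.1.symm, h.2.symm⟩⟩
  loopless := ⟨fun _ h => h.1 rfl⟩

def IsAncestor (f : V → V) (a b : V) : Prop := ∃ k, f^[k] b = a

namespace IsAncestor

variable {f : V → V} {a b c : V}

lemma refl (f : V → V) (a : V) : IsAncestor f a a := ⟨0, rfl⟩

lemma map_self (f : V → V) (a : V) : IsAncestor f (f a) a := ⟨1, rfl⟩

lemma of_map (h : IsAncestor f a (f b)) : IsAncestor f a b := by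
  obtain ⟨k, hk⟩ := h
  exact ⟨k + 1, hk⟩

lemma trans (hab : IsAncestor f a b) (hbc : IsAncestor f b c) : IsAncestor f a c := by
  obtain ⟨k, rfl⟩ := hab
  obtain ⟨m, rfl⟩ := hbc
  exact ⟨k + m, Function.iterate_add_apply f k m c⟩

lemma eq_or_map (h : IsAncestor f a b) : b = a ∨ IsAncestor f a (f b) := by
  obtain ⟨_ | k, hk⟩ := h
  · exact Or.inl hk
  · exact Or.inr ⟨k, hk⟩

lemma of_semiconj {W : Type*} {g : W → W} {φ : V → W} (hφ : Function.Injective φ)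
    (hfg : Function.Semiconj φ f g) : IsAncestor g (φ a) (φ b) ↔ IsAncestor f a b := by
  simp only [IsAncestor, ← (hfg.iterate_right _).eq, hφ.eq_iff]

end IsAncestor

lemma isAncestor_iff_of_reachable_deleteEdges {f : V → V} {a b c : V}
    (hbc : ((parentGraph f).deleteEdges {s(a, f a)}).Reachable b c) :
    IsAncestor f a b ↔ IsAncestor f a c := by
  obtain ⟨W⟩ := hbc
  induction W with
  | nil => rfl
  | @cons x y z hxy _ ih =>
    refine Iff.trans ?_ ih
    rw [SimpleGraph.deleteEdges_adj, Set.mem_singleton_iff] at hxy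
    obtain ⟨⟨-, hxy | hxy⟩, hne⟩ := hxy
    · subst hxy
      refine ⟨fun hx => (hx.eq_or_map).resolve_left ?_, IsAncestor.of_map⟩
      rintro rfl
      exact hne rfl
    · subst hxy
      refine ⟨IsAncestor.of_map, fun hy => (hy.eq_or_map).resolve_left ?_⟩
      rintro rfl
      exact hne Sym2.eq_swap

structure ParentRank (f : V → V) (r : V) (rk : V → ℕ) : Prop where
  map_root : f r = r
  rank_lt : ∀ a, a ≠ r → rk (f a) < rk a

namespace ParentRank

variable {f : V → V} {r : V} {rk : V → ℕ} (h : ParentRank f r rk)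
include h

lemma map_ne {a : V} (ha : a ≠ r) : f a ≠ a := fun he => (h.rank_lt a ha).ne (by rw [he])

lemma rank_map_le (a : V) : rk (f a) ≤ rk a := by
  obtain rfl | ha := eq_or_ne a r
  · rw [h.map_root]
  · exact (h.rank_lt a ha).le

lemma rank_le_of_isAncestor {a b : V} (hab : IsAncestor f a b) : rk a ≤ rk b := by
  obtain ⟨k, rfl⟩ := hab
  induction k with
  | zero => rfl
  | succ k ih => exact (Function.iterate_succ_apply' f k b ▸ h.rank_map_le _).trans ih

lemma not_isAncestor_map {a : V} (ha : a ≠ r) : ¬ IsAncestor f a (f a) :=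
  fun hd => (h.rank_le_of_isAncestor hd).not_gt (h.rank_lt a ha)

lemma isAncestor_root_iff {a : V} : IsAncestor f a r ↔ a = r := by
  refine ⟨fun ⟨k, hk⟩ => ?_, fun ha => ha ▸ IsAncestor.refl f r⟩
  rwa [Function.iterate_fixed h.map_root, eq_comm] at hk

lemma exists_reachable_mem {H : SimpleGraph V} {S : Set V} (hr : r ∈ S)
    (hH : ∀ x ∉ S, H.Adj x (f x)) (x : V) : ∃ s ∈ S, H.Reachable x s := by
  induction hx : rk x using Nat.strong_induction_on generalizing x with
  | _ n ih =>
    by_cases hxS : x ∈ S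
    · exact ⟨x, hxS, .refl x⟩
    · have hxr : x ≠ r := fun hxr => hxS (hxr ▸ hr)
      obtain ⟨s, hs, hreach⟩ := ih _ (hx ▸ h.rank_lt x hxr) (f x) rfl
      exact ⟨s, hs, (hH x hxS).reachable.trans hreach⟩

lemma connected : (parentGraph f).Connected := by
  have hroot : ∀ x, (parentGraph f).Reachable x r := fun x => by
    obtain ⟨s, rfl, hs⟩ := h.exists_reachable_mem (H := parentGraph f) (S := {r}) rfl
      (fun x hx => ⟨(h.map_ne hx).symm, Or.inl rfl⟩) x
    exact hs
  have : Nonempty V := ⟨r⟩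
  exact ⟨fun a b => (hroot a).trans (hroot b).symm⟩

lemma adj_deleteEdges {a x : V} (ha : a ≠ r) (hx : x ≠ r) (hxa : x ≠ a) :
    ((parentGraph f).deleteEdges {s(a, f a)}).Adj x (f x) := by
  rw [SimpleGraph.deleteEdges_adj, Set.mem_singleton_iff, Sym2.eq_iff]
  refine ⟨⟨(h.map_ne hx).symm, Or.inl rfl⟩, ?_⟩
  rintro (⟨rfl, -⟩ | ⟨rfl, hfx⟩)
  · exact hxa rfl
  · have := h.rank_lt _ hx
    have := h.rank_lt _ ha
    rw [hfx] at *
    omega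

lemma reachable_deleteEdges_iff {a : V} (ha : a ≠ r) {b c : V} :
    ((parentGraph f).deleteEdges {s(a, f a)}).Reachable b c ↔
      (IsAncestor f a b ↔ IsAncestor f a c) := by
  refine ⟨isAncestor_iff_of_reachable_deleteEdges, fun hbc => ?_⟩
  have climb := h.exists_reachable_mem (S := {a, r}) (by simp)
    (fun x hx => h.adj_deleteEdges ha (fun e => hx (by simp [e])) (fun e => hx (by simp [e])))
  have status : ∀ x s, s ∈ ({a, r} : Set V) →
      ((parentGraph f).deleteEdges {s(a, f a)}).Reachable x s → (IsAncestor f a x ↔ s = a) := by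
    rintro x s (rfl | rfl) hxs
    · exact (isAncestor_iff_of_reachable_deleteEdges hxs).trans (iff_of_true (.refl f s) rfl)
    · rw [isAncestor_iff_of_reachable_deleteEdges hxs, h.isAncestor_root_iff, eq_comm]
  obtain ⟨s, hs, hbs⟩ := climb b
  obtain ⟨s', hs', hcs'⟩ := climb c
  have hsame : s = a ↔ s' = a := (status b s hs hbs).symm.trans (hbc.trans (status c s' hs' hcs'))
  have hss' : s = s' := by
    rcases hs with rfl | rfl <;> rcases hs' with rfl | rfl <;> simp_all
  exact hbs.trans (hss' ▸ hcs'.symm)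

lemma isTree : (parentGraph f).IsTree := by
  refine ⟨h.connected, SimpleGraph.isAcyclic_iff_forall_adj_isBridge.2 ?_⟩
  suffices key : ∀ a, a ≠ r → (parentGraph f).IsBridge s(a, f a) by
    rintro x y ⟨hne, rfl | rfl⟩
    · exact key x fun hx => hne (by rw [hx, h.map_root])
    · rw [Sym2.eq_swap]
      exact key y fun hy => hne (by rw [hy, h.map_root])
  intro a ha hreach
  exact h.not_isAncestor_map ha ((h.reachable_deleteEdges_iff ha).1 hreach |>.1 (.refl f a))

end ParentRank

lemma neighborSet_parentGraph_subset (f : V → V) (a : V) :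
    (parentGraph f).neighborSet a ⊆ insert (f a) {b | b ≠ a ∧ f b = a} := by
  rintro b ⟨hne, hb | hb⟩
  · exact .inl hb.symm
  · exact .inr ⟨hne.symm, hb⟩

lemma mem_support_of_parent_closed {f : V → V} {S : SimpleGraph V}
    (hS : ∀ a b, S.Adj a b → f a = b ∨ f b = a) {A : Set V} {c : V}
    (hup : ∀ z ∈ A, f z ∈ A ∨ f z = c) (hdown : ∀ x, f x ∈ A → x ∈ A)
    {z z' : V} (W : S.Walk z z') (hz : z ∈ A) (hz' : z' ∉ A) : c ∈ W.support := by
  induction W with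
  | nil => exact absurd hz hz'
  | @cons a b _ hab W ih =>
    by_cases hb : b ∈ A
    · exact List.mem_cons_of_mem _ (ih hb hz')
    · rcases hS a b hab with rfl | rfl
      · rcases hup a hz with hfa | rfl
        · exact absurd hfa hb
        · exact List.mem_cons_of_mem _ W.start_mem_support
      · exact absurd (hdown b hz) hb

end ParentFunction

open SimpleGraph in
lemma SimpleGraph.IsTree.exists_parentRank {V : Type*} {S : SimpleGraph V} (hS : S.IsTree)
    (r : V) : ∃ p : V → V, ParentRank p r (S.dist · r) ∧
      ∀ a b, S.Adj a b → p a = b ∨ p b = a := by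
  choose P hP using fun t => (hS.connected t r).exists_walk_length_eq_dist
  have huniq : ∀ t (Q : S.Walk t r), Q.IsPath → Q = P t := fun t Q hQ =>
    (hS.existsUnique_path t r).unique hQ ((P t).isPath_of_length_eq_dist (hP t))
  have hfar : ∀ a b, S.Adj a b → S.dist b r = S.dist a r + 1 → (P b).snd = a := by
    intro a b hab hd
    have hlen : (Walk.cons hab.symm (P a)).length = S.dist b r := by simp [hP a, hd]
    rw [← huniq b _ ((Walk.cons hab.symm (P a)).isPath_of_length_eq_dist hlen)]
    simp
  refine ⟨fun t => (P t).snd, ⟨?_, fun t ht => ?_⟩, fun a b hab => ?_⟩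
  · simp [← huniq r .nil .nil]
  · have hnil : ¬ (P t).Nil := Walk.not_nil_of_ne ht
    calc S.dist (P t).snd r ≤ (P t).tail.length := dist_le _
      _ < (P t).length := by rw [← Walk.length_tail_add_one hnil]; omega
      _ = S.dist t r := hP t
  · rcases hS.dist_eq_dist_add_one_of_adj r hab with h | h <;>
      rw [dist_comm, dist_comm (u := r)] at h
    · exact .inl (hfar b a hab.symm h)
    · exact .inr (hfar a b hab h)

lemma exists_injective_strictMono_of_rank {V : Type*} [Finite V] (rk : V → ℕ) :
    ∃ ord : V → ℕ, Function.Injective ord ∧ ∀ a b, rk a < rk b → ord a < ord b := by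
  obtain ⟨n, ⟨e⟩⟩ := Finite.exists_equiv_fin V
  refine ⟨fun t => n * rk t + e t, fun a b hab => e.injective (Fin.ext ?_), fun a b hab => ?_⟩
  · simpa [Nat.mul_add_mod, Nat.mod_eq_of_lt] using congrArg (· % n) hab
  · nlinarith [(e a).isLt]

section Binarisation

variable {τ : Type*} (p : τ → τ) (ord : τ → ℕ)

def earlierSiblings (x : τ) : Set τ := {v | p v = p x ∧ v ≠ p x ∧ ord v < ord x}

variable {p ord} {r : τ}

lemma earlierSiblings_root (hp : ParentRank p r ord) : earlierSiblings p ord r = ∅ :=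
  Set.eq_empty_of_forall_notMem fun v ⟨hv, hvr, hlt⟩ => by
    rw [hp.map_root] at hv hvr
    exact hlt.not_gt (hv ▸ hp.rank_lt v hvr)

lemma mem_earlierSiblings_of_lt (hp : ParentRank p r ord) {z z' : τ} (hz : z ≠ r)
    (hpp : p z = p z') (hlt : ord z < ord z') : z ∈ earlierSiblings p ord z' :=
  ⟨hpp, hpp ▸ (hp.map_ne hz).symm, hlt⟩

variable (p ord) [Finite τ]

open Classical in
/-- Left-child right-sibling binarisation of the tree with parent map `p`. -/
noncomputable def chainParent (x : τ) : τ :=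
  if h : (earlierSiblings p ord x).Nonempty then
    (Set.exists_max_image _ ord (Set.toFinite _) h).choose
  else p x

lemma chainParent_spec (x : τ) :
    (chainParent p ord x ∈ earlierSiblings p ord x ∧
      ∀ v ∈ earlierSiblings p ord x, ord v ≤ ord (chainParent p ord x)) ∨
    (earlierSiblings p ord x = ∅ ∧ chainParent p ord x = p x) := by
  unfold chainParent
  split_ifs with h
  · exact .inl (Set.exists_max_image _ ord (Set.toFinite _) h).choose_spec
  · exact .inr ⟨Set.not_nonempty_iff_eq_empty.1 h, rfl⟩

variable {p ord}

/-- Along the chain of earlier siblings the old parent does not change. -/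
lemma isAncestor_parent_or_parent_eq {u z : τ} (hz : IsAncestor (chainParent p ord) u z) :
    IsAncestor (chainParent p ord) u (p z) ∨ p z = p u := by
  obtain ⟨k, hk⟩ := hz
  induction k generalizing z with
  | zero => exact .inr (by rw [← hk]; rfl)
  | succ k ih =>
    rcases chainParent_spec p ord z with ⟨hs, -⟩ | ⟨-, hz⟩
    · rw [← hs.1]
      exact ih hk
    · exact .inl ⟨k, hz ▸ hk⟩

section
variable (hp : ParentRank p r ord)
include hp

lemma chainParent_parentRank : ParentRank (chainParent p ord) r ord where
  map_root := by
    rcases chainParent_spec p ord r with ⟨hs, -⟩ | ⟨-, h⟩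
    · simp [earlierSiblings_root hp] at hs
    · rw [h, hp.map_root]
  rank_lt x hx := by
    rcases chainParent_spec p ord x with ⟨hs, -⟩ | ⟨-, h⟩
    · exact hs.2.2
    · exact h ▸ hp.rank_lt x hx

lemma isAncestor_chainParent_parent {x : τ} (hx : x ≠ r) :
    IsAncestor (chainParent p ord) (p x) x := by
  induction hn : ord x using Nat.strong_induction_on generalizing x with
  | _ n ih =>
    rcases chainParent_spec p ord x with ⟨hs, -⟩ | ⟨-, h⟩
    · refine IsAncestor.of_map (hs.1 ▸ ih _ (hn ▸ hs.2.2) (fun hr => hs.2.1 ?_) rfl)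
      rw [← hs.1, hr, hp.map_root]
    · exact h ▸ IsAncestor.map_self _ x

lemma mem_support_of_isAncestor_chainParent {S : SimpleGraph τ}
    (hS : ∀ a b, S.Adj a b → p a = b ∨ p b = a) {u z z' : τ} (W : S.Walk z z')
    (hz : IsAncestor (chainParent p ord) u z) (hz' : ¬ IsAncestor (chainParent p ord) u z') :
    p u ∈ W.support := by
  refine mem_support_of_parent_closed hS (A := {z | IsAncestor (chainParent p ord) u z})
    (fun z hz => isAncestor_parent_or_parent_eq hz) (fun x hx => ?_) W hz hz'
  obtain rfl | hxr := eq_or_ne x r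
  · rwa [hp.map_root] at hx
  · exact IsAncestor.trans hx (isAncestor_chainParent_parent hp hxr)

/-- The children of `t` in the binarised tree are its next sibling and its first child. -/
lemma ncard_chainParent_children_le (hord : Function.Injective ord) (t : τ) :
    {z | z ≠ t ∧ chainParent p ord z = t}.ncard ≤ 2 := by
  have hnext : {z | t ∈ earlierSiblings p ord z ∧ chainParent p ord z = t}.Subsingleton := by
    intro z hz z' hz'
    by_contra hne
    wlog hlt : ord z < ord z' generalizing z z'
    · exact this hz' hz (Ne.symm hne) ((hord.ne hne).symm.lt_of_le (not_lt.1 hlt))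
    have hzr : z ≠ r := by rintro rfl; simp [earlierSiblings_root hp] at hz
    have hmax := (chainParent_spec p ord z').resolve_right
      fun h => Set.notMem_empty t (h.1 ▸ hz'.1)
    have := hmax.2 z (mem_earlierSiblings_of_lt hp hzr (hz.1.1.symm.trans hz'.1.1) hlt)
    rw [hz'.2] at this
    have := hz.1.2.2
    omega
  have hfirst : {z | z ≠ t ∧ earlierSiblings p ord z = ∅ ∧ p z = t}.Subsingleton := by
    intro z hz z' hz'
    by_contra hne
    wlog hlt : ord z < ord z' generalizing z z'
    · exact this hz' hz (Ne.symm hne) ((hord.ne hne).symm.lt_of_le (not_lt.1 hlt))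
    have hzr : z ≠ r := by rintro rfl; exact hz.1 (by rw [← hz.2.2, hp.map_root])
    have := mem_earlierSiblings_of_lt hp hzr (hz.2.2.trans hz'.2.2.symm) hlt
    simp [hz'.2.1] at this
  have hsub : {z | z ≠ t ∧ chainParent p ord z = t} ⊆
      {z | t ∈ earlierSiblings p ord z ∧ chainParent p ord z = t} ∪
        {z | z ≠ t ∧ earlierSiblings p ord z = ∅ ∧ p z = t} := by
    rintro z ⟨hzt, rfl⟩
    rcases chainParent_spec p ord z with ⟨hs, -⟩ | ⟨he, h⟩
    · exact .inl ⟨hs, rfl⟩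
    · exact .inr ⟨hzt, he, h.symm⟩
  calc _ ≤ _ := Set.ncard_le_ncard hsub
    _ ≤ _ := Set.ncard_union_le _ _
    _ ≤ 1 + 1 := add_le_add (Set.ncard_le_one_iff_subsingleton.2 hnext)
        (Set.ncard_le_one_iff_subsingleton.2 hfirst)

end

end Binarisation

section Leaves

variable {τ : Type*} (g : τ → τ)

/-- Every node `t` receives a new leaf `inl t` hanging below `inr t`. -/
def leafParent : τ ⊕ τ → τ ⊕ τ := Sum.elim Sum.inr (Sum.inr ∘ g)

variable {g}

lemma leafParent_ne_inl (x : τ ⊕ τ) (t : τ) : leafParent g x ≠ .inl t := by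
  cases x <;> simp [leafParent]

lemma ParentRank.leafParent {r : τ} {rk : τ → ℕ} (h : ParentRank g r rk) :
    ParentRank (leafParent g) (.inr r) (Sum.elim (2 * rk · + 1) (2 * rk ·)) where
  map_root := by simp [_root_.leafParent, h.map_root]
  rank_lt
    | .inl _, _ => by simp [_root_.leafParent]
    | .inr x, hx => by
      simpa [_root_.leafParent] using h.rank_lt x fun hxr => hx (hxr ▸ rfl)

lemma isAncestor_leafParent_inr_iff {u z : τ} :
    IsAncestor (leafParent g) (.inr u) (.inr z) ↔ IsAncestor g u z :=
  IsAncestor.of_semiconj Sum.inr_injective fun _ => rfl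

lemma isAncestor_leafParent_inr_inl_iff {u z : τ} :
    IsAncestor (leafParent g) (.inr u) (.inl z) ↔ IsAncestor g u z :=
  ⟨fun h => isAncestor_leafParent_inr_iff.1 (h.eq_or_map.resolve_left Sum.inl_ne_inr),
    fun h => (isAncestor_leafParent_inr_iff.2 h).of_map⟩

lemma isAncestor_leafParent_inl_iff {t : τ} {z : τ ⊕ τ} :
    IsAncestor (leafParent g) (.inl t) z ↔ z = .inl t := by
  refine ⟨fun h => h.eq_or_map.resolve_right ?_, fun h => h ▸ .refl _ _⟩
  rintro ⟨k, hk⟩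
  rw [← Function.iterate_succ_apply, Function.iterate_succ_apply'] at hk
  exact leafParent_ne_inl _ _ hk

variable [Finite τ]

lemma ncard_neighborSet_leafParent_inl_le (t : τ) :
    ((parentGraph (leafParent g)).neighborSet (.inl t)).ncard ≤ 1 := by
  have hsub : (parentGraph (leafParent g)).neighborSet (.inl t) ⊆ {.inr t} := by
    refine (neighborSet_parentGraph_subset _ _).trans ?_
    rintro _ (rfl | ⟨-, hb⟩)
    · rfl
    · exact absurd hb (leafParent_ne_inl _ _)
  exact (Set.ncard_le_ncard hsub).trans (Set.ncard_singleton _).le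

lemma ncard_neighborSet_leafParent_inr_le (t : τ) :
    ((parentGraph (leafParent g)).neighborSet (.inr t)).ncard ≤
      {z | z ≠ t ∧ g z = t}.ncard + 2 := by
  have hsub : (parentGraph (leafParent g)).neighborSet (.inr t) ⊆
      insert (.inr (g t)) (insert (.inl t) (Sum.inr '' {z | z ≠ t ∧ g z = t})) := by
    refine (neighborSet_parentGraph_subset _ _).trans (Set.insert_subset_insert ?_)
    rintro (z | z) ⟨hne, hz⟩
    · exact .inl (Sum.inr_injective hz ▸ rfl)
    · exact .inr ⟨z, ⟨fun h => hne (h ▸ rfl), Sum.inr_injective hz⟩, rfl⟩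
  have h1 := Set.ncard_insert_le (Sum.inr (g t) : τ ⊕ τ)
    (insert (.inl t) (Sum.inr '' {z | z ≠ t ∧ g z = t}))
  have h2 := Set.ncard_insert_le (Sum.inl t : τ ⊕ τ) (Sum.inr '' {z | z ≠ t ∧ g z = t})
  have h3 := Set.ncard_image_le (f := (Sum.inr : τ → τ ⊕ τ)) (s := {z | z ≠ t ∧ g z = t})
  have := Set.ncard_le_ncard hsub
  omega

end Leaves

namespace Multigraph

variable {G : Multigraph}

lemma edgeCut_compl (U : Set G.V) : G.edgeCut Uᶜ = G.edgeCut U := by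
  ext e
  constructor <;> rintro ⟨a, b, hab, ha, hb⟩ <;>
    exact ⟨b, a, hab.trans Sym2.eq_swap, by simpa using hb, by simpa using ha⟩

lemma ncard_edgeCut_le {d : ℕ} (hdeg : ∀ v, G.degree v ≤ d) {U Y : Set G.V}
    (hY : ∀ e ∈ G.edgeCut U, ∃ z ∈ Y, z ∈ G.ends e) :
    (G.edgeCut U).ncard ≤ Y.ncard * d := by
  have hfin := Y.toFinite
  calc (G.edgeCut U).ncard ≤ (⋃ z ∈ hfin.toFinset, {e | z ∈ G.ends e}).ncard :=
        Set.ncard_le_ncard fun e he => by simpa using hY e he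
    _ ≤ ∑ z ∈ hfin.toFinset, {e | z ∈ G.ends e}.ncard := Finset.set_ncard_biUnion_le _ _
    _ ≤ hfin.toFinset.card • d :=
        Finset.sum_le_card_nsmul _ _ _ fun z _ => hdeg z
    _ = Y.ncard * d := by rw [smul_eq_mul, Set.ncard_eq_toFinset_card Y hfin]

lemma threeCenterCard_le_card (H : Multigraph) (X : Set H.V) :
    threeCenterCard H X ≤ Nat.card H.V := by
  refine csSup_le' ?_
  rintro _ ⟨C, ⟨⟨I, -⟩, -⟩, rfl⟩
  exact Nat.card_le_card_of_injective I.vmap I.vmap_inj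

lemma TreeCutDecomp.tcw_le (D : TreeCutDecomp G) {k : ℕ} (hadh : D.adhesion ≤ k)
    (htorso : ∀ t, Nat.card (D.torso t).V ≤ k) : tcw G ≤ k := by
  calc tcw G ≤ D.width := Nat.sInf_le ⟨D, rfl⟩
    _ ≤ k := max_le hadh (csSup_le' ?_)
  rintro _ ⟨t, rfl⟩
  exact (threeCenterCard_le_card _ _).trans (htorso t)

lemma TreeDecomp.exists_walk_subset_bags (D : TreeDecomp G) (v : G.V) {s s' : D.T}
    (hs : v ∈ D.bag s) (hs' : v ∈ D.bag s') :
    ∃ W : D.tree.Walk s s', ∀ n ∈ W.support, v ∈ D.bag n := by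
  obtain ⟨W⟩ := (D.connected v).preconnected ⟨s, hs⟩ ⟨s', hs'⟩
  have hW : ∀ n ∈ (W.map (SimpleGraph.Embedding.induce _).toHom).support, v ∈ D.bag n := by
    simp only [SimpleGraph.Walk.support_map, List.mem_map]
    rintro _ ⟨m, -, rfl⟩
    exact m.2
  exact ⟨_, hW⟩

lemma TreeDecomp.exists_mem_bag_of_mem_edgeCut (D : TreeDecomp G) {place : G.V → D.T}
    (hplace : ∀ v, v ∈ D.bag (place v)) {A : Set D.T} {c : D.T}
    (hsep : ∀ a b (W : D.tree.Walk a b), a ∈ A → b ∉ A → c ∈ W.support)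
    {e : G.E} (he : e ∈ G.edgeCut (place ⁻¹' A)) : ∃ z ∈ D.bag c, z ∈ G.ends e := by
  obtain ⟨x, y, hxy, hx, hy⟩ := he
  obtain ⟨s, x', y', hends, hx', hy'⟩ := D.covers_e e
  have hbag : x ∈ D.bag s ∧ y ∈ D.bag s := by
    rw [hxy, Sym2.eq_iff] at hends
    rcases hends with ⟨rfl, rfl⟩ | ⟨rfl, rfl⟩
    exacts [⟨hx', hy'⟩, ⟨hy', hx'⟩]
  by_cases hs : s ∈ A
  · obtain ⟨W, hW⟩ := D.exists_walk_subset_bags y hbag.2 (hplace y)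
    exact ⟨y, hW c (hsep _ _ W hs hy), hxy ▸ Sym2.mem_mk_right x y⟩
  · obtain ⟨W, hW⟩ := D.exists_walk_subset_bags x (hplace x) hbag.1
    exact ⟨x, hW c (hsep _ _ W hx hs), hxy ▸ Sym2.mem_mk_left x y⟩

def TreeDecomp.single (G : Multigraph) : TreeDecomp G where
  T := Unit
  finT := inferInstance
  tree := ⊥
  isTree := .of_subsingleton
  bag _ := Set.univ
  covers_v _ := ⟨(), trivial⟩
  covers_e e := by
    obtain ⟨⟨x, y⟩, hxy⟩ := Quot.exists_rep (G.ends e)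
    exact ⟨(), x, y, hxy.symm, trivial, trivial⟩
  connected _ := @SimpleGraph.Connected.of_subsingleton _ _ ⟨⟨(), trivial⟩⟩ _

lemma exists_treeDecomp_of_treewidth_le {w : ℕ} (htw : treewidth G ≤ w) :
    ∃ D : TreeDecomp G, ∀ t, (D.bag t).ncard ≤ w + 1 := by
  have hne : {n | ∃ D : TreeDecomp G, ∀ t : D.T, (D.bag t).ncard ≤ n + 1}.Nonempty :=
    ⟨Nat.card G.V, TreeDecomp.single G, fun _ => (Set.ncard_univ G.V).trans_le (Nat.le_succ _)⟩
  obtain ⟨D, hD⟩ := Nat.sInf_mem hne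
  exact ⟨D, fun t => (hD t).trans (by rw [treewidth] at htw; omega)⟩

namespace TreeCutDecomp

variable {τ : Type} [Finite τ] {f : τ → τ} {r : τ} {rk : τ → ℕ}

def ofParent (h : ParentRank f r rk) (place : G.V → τ) : TreeCutDecomp G where
  T := τ
  finT := inferInstance
  tree := parentGraph f
  isTree := h.isTree
  bag t := place ⁻¹' {t}
  disj _ _ hst := Set.disjoint_left.2 fun _ hs ht => hst (hs.symm.trans ht)
  covers v := ⟨place v, rfl⟩

lemma sideSet_ofParent (h : ParentRank f r rk) (place : G.V → τ) (u v : τ) :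
    (ofParent h place).sideSet u v =
      {x | ((parentGraph f).deleteEdges {s(u, v)}).Reachable v (place x)} := by
  ext x
  refine ⟨fun ⟨s, hreach, hx⟩ => ?_, fun hreach => ⟨_, hreach, rfl⟩⟩
  rwa [show s = place x from (hx : place x = s).symm] at hreach

lemma ncard_edgeCut_sideSet_le (h : ParentRank f r rk) (place : G.V → τ) {k : ℕ}
    (hcut : ∀ a, a ≠ r → (G.edgeCut (place ⁻¹' {b | IsAncestor f a b})).ncard ≤ k)
    {u v : τ} (huv : (parentGraph f).Adj u v) :
    (G.edgeCut ((ofParent h place).sideSet u v)).ncard ≤ k := by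
  rw [sideSet_ofParent]
  obtain ⟨hne, rfl | rfl⟩ := huv
  · have hu : u ≠ r := fun hu => hne (by rw [hu, h.map_root])
    have hside : {x | ((parentGraph f).deleteEdges {s(u, f u)}).Reachable (f u) (place x)} =
        (place ⁻¹' {b | IsAncestor f u b})ᶜ := by
      ext x
      exact (h.reachable_deleteEdges_iff hu).trans (iff_false_left (h.not_isAncestor_map hu))
    rw [hside, edgeCut_compl]
    exact hcut u hu
  · have hv : v ≠ r := fun hv => hne (by rw [hv, h.map_root])
    have hside : {x | ((parentGraph f).deleteEdges {s(f v, v)}).Reachable v (place x)} =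
        place ⁻¹' {b | IsAncestor f v b} := by
      ext x
      rw [Sym2.eq_swap]
      exact (h.reachable_deleteEdges_iff hv).trans (iff_true_left (.refl f v))
    rw [hside]
    exact hcut v hv

lemma adhesion_ofParent_le (h : ParentRank f r rk) (place : G.V → τ) {k : ℕ}
    (hcut : ∀ a, a ≠ r → (G.edgeCut (place ⁻¹' {b | IsAncestor f a b})).ncard ≤ k) :
    (ofParent h place).adhesion ≤ k := by
  refine csSup_le' ?_
  rintro _ ⟨u, v, huv, rfl⟩
  exact ncard_edgeCut_sideSet_le h place hcut huv

lemma card_torso_ofParent (h : ParentRank f r rk) (place : G.V → τ) (t : τ) :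
    Nat.card ((ofParent h place).torso t).V =
      (place ⁻¹' {t}).ncard + ((parentGraph f).neighborSet t).ncard :=
  Nat.card_sum

end TreeCutDecomp

section Construction

attribute [local instance] TreeDecomp.finT

variable {d w : ℕ} {D0 : TreeDecomp G} {p : D0.T → D0.T} {r : D0.T} {ord : D0.T → ℕ}
  {place : G.V → D0.T}

lemma ncard_edgeCut_leafParent_le (hdeg : ∀ v, G.degree v ≤ d)
    (hbag : ∀ t, (D0.bag t).ncard ≤ w + 1) (hplace : ∀ v, v ∈ D0.bag (place v))
    (hp : ParentRank p r ord) (hS : ∀ a b, D0.tree.Adj a b → p a = b ∨ p b = a)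
    (a : D0.T ⊕ D0.T) (ha : a ≠ .inr r) :
    (G.edgeCut ((Sum.inl ∘ place) ⁻¹'
      {b | IsAncestor (leafParent (chainParent p ord)) a b})).ncard ≤ (w + 1) * d := by
  rcases a with t | u
  · have hA : (Sum.inl ∘ place) ⁻¹'
        {b | IsAncestor (leafParent (chainParent p ord)) (.inl t) b} = place ⁻¹' {t} := by
      ext
      simp [isAncestor_leafParent_inl_iff]
    rw [hA]
    refine (ncard_edgeCut_le hdeg fun e he => ?_).trans (Nat.mul_le_mul_right d (hbag t))
    exact D0.exists_mem_bag_of_mem_edgeCut hplace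
      (fun _ _ W ha _ => (ha : _ = t) ▸ W.start_mem_support) he
  · have hA : (Sum.inl ∘ place) ⁻¹'
        {b | IsAncestor (leafParent (chainParent p ord)) (.inr u) b} =
          place ⁻¹' {z | IsAncestor (chainParent p ord) u z} := by
      ext
      simp [isAncestor_leafParent_inr_inl_iff]
    rw [hA]
    refine (ncard_edgeCut_le hdeg fun e he => ?_).trans (Nat.mul_le_mul_right d (hbag (p u)))
    exact D0.exists_mem_bag_of_mem_edgeCut hplace
      (fun _ _ W ha hb => mem_support_of_isAncestor_chainParent hp hS W ha hb) he

lemma card_torso_leafParent_le (hbag : ∀ t, (D0.bag t).ncard ≤ w + 1)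
    (hplace : ∀ v, v ∈ D0.bag (place v)) (hp : ParentRank p r ord)
    (hord : Function.Injective ord) (t : D0.T ⊕ D0.T) :
    Nat.card ((TreeCutDecomp.ofParent (chainParent_parentRank hp).leafParent
      (Sum.inl ∘ place)).torso t).V ≤ max (w + 2) 4 := by
  rw [TreeCutDecomp.card_torso_ofParent]
  rcases t with t | t
  · have hbag_t : (Sum.inl ∘ place : G.V → D0.T ⊕ D0.T) ⁻¹' {.inl t} ⊆ D0.bag t := by
      rintro v hv
      rw [← Sum.inl_injective hv]
      exact hplace v
    have := (Set.ncard_le_ncard hbag_t).trans (hbag t)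
    have := ncard_neighborSet_leafParent_inl_le (g := chainParent p ord) t
    omega
  · have hempty : (Sum.inl ∘ place : G.V → D0.T ⊕ D0.T) ⁻¹' {.inr t} = ∅ :=
      Set.eq_empty_of_forall_notMem fun v hv => Sum.inl_ne_inr hv
    have := ncard_neighborSet_leafParent_inr_le (g := chainParent p ord) t
    have := ncard_chainParent_children_le hp hord t
    rw [hempty, Set.ncard_empty]
    omega

lemma exists_treeCutDecomp_of_treeDecomp (hdeg : ∀ v, G.degree v ≤ d) (D0 : TreeDecomp G)
    (hbag : ∀ t, (D0.bag t).ncard ≤ w + 1) :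
    ∃ D : TreeCutDecomp G, D.adhesion ≤ (w + 1) * d ∧
      ∀ t, Nat.card (D.torso t).V ≤ max (w + 2) 4 := by
  obtain ⟨r⟩ : Nonempty D0.T := D0.isTree.connected.nonempty
  obtain ⟨p, hp, hS⟩ := D0.isTree.exists_parentRank r
  obtain ⟨ord, hord, hmono⟩ := exists_injective_strictMono_of_rank (D0.tree.dist · r)
  have hpo : ParentRank p r ord := ⟨hp.map_root, fun a ha => hmono _ _ (hp.rank_lt a ha)⟩
  choose place hplace using D0.covers_v
  exact ⟨_, TreeCutDecomp.adhesion_ofParent_le _ _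
      (ncard_edgeCut_leafParent_le hdeg hbag hplace hpo hS),
    card_torso_leafParent_le hbag hplace hpo hord⟩

end Construction

end Multigraph

open Multigraph in
/-- bounded degree and bounded tree-width imply bounded tree-cut
width, with the stated explicit bounds. -/
theorem tcw_le_of_treewidth_and_degree (w d : ℕ) (hw : 1 ≤ w) (hd : 1 ≤ d)
    (G : Multigraph) (hdeg : ∀ v : G.V, G.degree v ≤ d) (htw : treewidth G ≤ w) :
    (∃ D : TreeCutDecomp G, D.adhesion ≤ (2 * w + 2) * d ∧
      ∀ t : D.T, Nat.card (D.torso t).V ≤ (d + 1) * (w + 1)) ∧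
    tcw G ≤ (2 * w + 2) * d := by
  obtain ⟨D0, hbag⟩ := exists_treeDecomp_of_treewidth_le htw
  obtain ⟨D, hadh, htorso⟩ := exists_treeCutDecomp_of_treeDecomp hdeg D0 hbag
  have hadh' : D.adhesion ≤ (2 * w + 2) * d := hadh.trans (Nat.mul_le_mul_right d (by omega))
  have htorso' : ∀ t, Nat.card (D.torso t).V ≤ (d + 1) * (w + 1) := fun t =>
    (htorso t).trans (max_le (by nlinarith) (by nlinarith))
  exact ⟨⟨D, hadh', htorso'⟩, D.tcw_le hadh' fun t => (htorso' t).trans (by nlinarith)⟩
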